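/- arXiv:1711.01339 — 2 statements merged into one kernel-verified Lean document; each statement's English description precedes it below -/
import Mathlib

section
/- Let ℓ ≥ 1, i ∈ {1,…,ℓ}, and z ∈ [0,1]. Then the average of f_{K,i}(z) over all K ∈ GL(ℓ,F₂), namely (1/|GL(ℓ,F₂)|)·Σ_{K ∈ GL(ℓ,F₂)} f_{K,i}(z), equals Σ_{s=0}^{ℓ} C(ℓ,s)·z^s·(1−z)^{ℓ−s}·p_{i|s}, where C(ℓ,s) is the binomial coefficient. -/
open scoped Classical

noncomputable section

/-- Bit `i` (0-indexed; it represents the 1-indexed bit `i+1`) is decodable under the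
kernel `K` and the erasure set `S`. -/
def Decodable (ℓ : ℕ) (K : Matrix (Fin ℓ) (Fin ℓ) (ZMod 2)) (i : Fin ℓ)
    (S : Finset (Fin ℓ)) : Prop :=
  ∀ u u' : Fin ℓ → ZMod 2,
    (∀ j : Fin ℓ, j < i → u j = u' j) →
    (∀ j : Fin ℓ, j ∉ S → Matrix.vecMul u K j = Matrix.vecMul u' K j) →
    u i = u' i

/-- The polarization behavior `f_{K,i}(z)` of the kernel `K`. -/
def fK (ℓ : ℕ) (K : Matrix (Fin ℓ) (Fin ℓ) (ZMod 2)) (i : Fin ℓ) (z : ℝ) : ℝ :=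
  ∑ S : Finset (Fin ℓ),
    if ¬ Decodable ℓ K i S then z ^ S.card * (1 - z) ^ (ℓ - S.card) else 0

/-- The polarization process `Z_m(z, b)`. -/
def Zproc (ℓ : ℕ) (K : Matrix (Fin ℓ) (Fin ℓ) (ZMod 2)) (z : ℝ) :
    (m : ℕ) → (Fin m → Fin ℓ) → ℝ
  | 0, _ => z
  | m + 1, b => fK ℓ K (b (Fin.last m)) (Zproc ℓ K z m (fun j => b j.castSucc))

/-- `g_α(z) = z^α (1-z)^α`. -/
def gfun (α z : ℝ) : ℝ := z ^ α * (1 - z) ^ α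

/-- `λ_{α,K}(z)`. -/
def lam (ℓ : ℕ) (K : Matrix (Fin ℓ) (Fin ℓ) (ZMod 2)) (α z : ℝ) : ℝ :=
  ((1 / (ℓ : ℝ)) * ∑ i : Fin ℓ, gfun α (fK ℓ K i z)) / gfun α z

/-- `λ*_{α,K} = sup_{z ∈ (0,1)} λ_{α,K}(z)`. -/
def lamStar (ℓ : ℕ) (K : Matrix (Fin ℓ) (Fin ℓ) (ZMod 2)) (α : ℝ) : ℝ :=
  sSup (lam ℓ K α '' Set.Ioo 0 1)

/-- `E_z[h(Z_m)]`, the uniform average over branch sequences `b`. -/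
def expZ (ℓ : ℕ) (K : Matrix (Fin ℓ) (Fin ℓ) (ZMod 2)) (z : ℝ) (m : ℕ) (h : ℝ → ℝ) : ℝ :=
  (∑ b : Fin m → Fin ℓ, h (Zproc ℓ K z m b)) / (ℓ : ℝ) ^ m


/-- `E_j`: the span of the first `j` standard basis vectors of `F₂^ℓ`. -/
def Ej (ℓ j : ℕ) : Submodule (ZMod 2) (Fin ℓ → ZMod 2) :=
  Submodule.span (ZMod 2) {v | ∃ k : Fin ℓ, (k : ℕ) < j ∧ v = Pi.single k 1}

/-- The average conditional erasure probability `p_{i|s}` (with `i` 1-indexed): the fraction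
of `(ℓ-s)`-dimensional subspaces `R` of `F₂^ℓ` with `R ∩ (E_i \ E_{i-1}) = ∅`. -/
def pis (ℓ i s : ℕ) : ℝ :=
  (Nat.card {R : Submodule (ZMod 2) (Fin ℓ → ZMod 2) //
      Module.finrank (ZMod 2) ↥R = ℓ - s ∧
      (R : Set (Fin ℓ → ZMod 2)) ∩ ((Ej ℓ i : Set (Fin ℓ → ZMod 2)) \
        (Ej ℓ (i - 1) : Set (Fin ℓ → ZMod 2))) = ∅} : ℝ) /
  (Nat.card {R : Submodule (ZMod 2) (Fin ℓ → ZMod 2) //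
      Module.finrank (ZMod 2) ↥R = ℓ - s} : ℝ)

/-- The 2-Gaussian binomial coefficient `[a choose t]₂`, as a real number. -/
def gaussBinom (a t : ℕ) : ℝ :=
  ∏ j ∈ Finset.range t, ((2 ^ a - 2 ^ j : ℝ) / (2 ^ t - 2 ^ j : ℝ))

/-- The average erasure probability `F_i(z)` of the `i`-th bit-channel (`i` 1-indexed). -/
def Favg (ℓ i : ℕ) (z : ℝ) : ℝ :=
  ∑ s ∈ Finset.range (ℓ + 1), (Nat.choose ℓ s : ℝ) * z ^ s * (1 - z) ^ (ℓ - s) * pis ℓ i s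

/-!
Bit `i` is a linear function of the observed functionals `u ↦ u j` (`j < i`) and
`u ↦ (u K) j` (`j ∉ S`) exactly when `e_i` lies in their span, i.e. in `E_i + R_K`, where
`R_K` is the span of the columns of `K` at the unerased positions; over `F₂` this fails exactly
when `R_K ∩ (E_{i+1} ∖ E_i) = ∅`. Now `R_K = K • V_S` for the coordinate subspace
`V_S = span {e_j | j ∉ S}`, and `GL(ℓ, F₂)` acts transitively on subspaces of a given
dimension, so by orbit–stabilizer `K • V_S` is uniformly distributed over the
`(ℓ - |S|)`-dimensional subspaces as `K` is. Hence the fraction of kernels for which bit `i`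
is not decodable under `S` is `p_{i+1 | |S|}`, and grouping the erasure patterns by size gives
the formula.
-/

open Module Matrix Submodule
open scoped Pointwise

theorem Submodule.mem_iff_forall_dotProduct_eq_zero {F n : Type*} [Field F] [Fintype n]
    [DecidableEq n] {p : Submodule F (n → F)} {x : n → F} :
    x ∈ p ↔ ∀ v : n → F, (∀ w ∈ p, v ⬝ᵥ w = 0) → v ⬝ᵥ x = 0 := by
  refine ⟨fun hx v hv => hv x hx, fun h => ?_⟩
  by_contra hx
  obtain ⟨f, hfx, hpf⟩ := p.exists_le_ker_of_notMem hx
  have hf : ∀ w, (dotProductEquiv F n).symm f ⬝ᵥ w = f w := fun w =>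
    congrArg (· w) ((dotProductEquiv F n).apply_symm_apply f)
  exact hfx (by simpa [hf] using h _ fun w hw => (hf w).trans (hpf hw))

theorem Submodule.forall_mem_span_dotProduct_eq_zero {R n : Type*} [CommRing R] [Fintype n]
    {s : Set (n → R)} {v : n → R} :
    (∀ w ∈ span R s, v ⬝ᵥ w = 0) ↔ ∀ w ∈ s, v ⬝ᵥ w = 0 :=
  ⟨fun h w hw => h w (subset_span hw),
    fun h _ hw => span_le (p := LinearMap.ker (dotProductBilin R R v)).2 h hw⟩

theorem MulAction.natCard_subtype_smul_mul_natCard_orbit {G α : Type*} [Group G] [MulAction G α]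
    (a : α) (P : α → Prop) :
    Nat.card {g : G // P (g • a)} * Nat.card (orbit G a) =
      Nat.card {b : orbit G a // P b} * Nat.card G := by
  set e := orbitEquivQuotientStabilizer G a
  set t : Set (G ⧸ stabilizer G a) := {q | P (e.symm q)}
  have hpre : Nat.card {g : G // P (g • a)} = Nat.card (stabilizer G a) * Nat.card t :=
    QuotientGroup.card_preimage_mk _ t
  have ht : Nat.card t = Nat.card {b : orbit G a // P b} :=
    Nat.card_congr (e.symm.subtypeEquiv fun _ => Iff.rfl)
  rw [hpre, ht, ← Subgroup.card_mul_index (stabilizer G a), index_stabilizer,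
    ← Nat.card_coe_set_eq]
  ring

theorem Submodule.exists_linearEquiv_map_eq {K V : Type*} [DivisionRing K] [AddCommGroup V]
    [Module K V] [FiniteDimensional K V] {p q : Submodule K V}
    (h : finrank K p = finrank K q) : ∃ g : V ≃ₗ[K] V, p.map (g : V →ₗ[K] V) = q := by
  obtain ⟨C, hC⟩ := p.exists_isCompl
  obtain ⟨D, hD⟩ := q.exists_isCompl
  have hCD : finrank K C = finrank K D := by
    have := Submodule.finrank_add_eq_of_isCompl hC
    have := Submodule.finrank_add_eq_of_isCompl hD
    omega
  let g := (p.prodEquivOfIsCompl C hC).symm ≪≫ₗ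
    (LinearEquiv.ofFinrankEq _ _ h).prodCongr (LinearEquiv.ofFinrankEq _ _ hCD) ≪≫ₗ
    q.prodEquivOfIsCompl D hD
  refine ⟨g, Submodule.eq_of_le_of_finrank_le ?_ (by rw [LinearEquiv.finrank_map_eq, h])⟩
  rintro _ ⟨x, hx, rfl⟩
  simp [g, Submodule.prodEquivOfIsCompl_symm_apply_left _ _ hC ⟨x, hx⟩]

theorem Matrix.GeneralLinearGroup.orbit_submodule_eq {n F : Type*} [Fintype n] [DecidableEq n]
    [Field F] (p : Submodule F (n → F)) :
    MulAction.orbit (GL n F) p = {q : Submodule F (n → F) | finrank F q = finrank F p} := by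
  ext q
  constructor
  · rintro ⟨A, rfl⟩
    exact LinearEquiv.finrank_map_eq (DistribMulAction.toLinearEquiv F (n → F) A) p
  · intro hq
    obtain ⟨g, rfl⟩ := Submodule.exists_linearEquiv_map_eq hq.symm
    refine ⟨toLin.symm ((LinearMap.GeneralLinearGroup.generalLinearEquiv F (n → F)).symm g), ?_⟩
    dsimp only
    rw [Units.smul_def, pointwise_smul_def]
    congr 1
    refine LinearMap.ext fun v => ?_
    rw [DistribSMul.toLinearMap_apply, smul_eq_mulVec, ← mulVecLin_apply, ← toLin_apply,
      MulEquiv.apply_symm_apply]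
    rfl

lemma finrank_span_basisFun_image {R n : Type*} [CommRing R] [Nontrivial R] [Fintype n]
    (T : Set n) [Fintype T] :
    finrank R (span R (Pi.basisFun R n '' T)) = Fintype.card T := by
  rw [Set.image_eq_range]
  exact finrank_span_eq_card ((Pi.basisFun R n).linearIndependent.comp _ Subtype.val_injective)

section

variable {ℓ : ℕ}

lemma Ej_eq_span_image (j : ℕ) :
    Ej ℓ j = span (ZMod 2) (Pi.basisFun (ZMod 2) (Fin ℓ) '' {k | (k : ℕ) < j}) := by
  rw [Ej]
  congr 1
  ext v
  simp [eq_comm]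

lemma mem_Ej_iff {j : ℕ} {v : Fin ℓ → ZMod 2} :
    v ∈ Ej ℓ j ↔ ∀ k : Fin ℓ, j ≤ k → v k = 0 := by
  rw [Ej_eq_span_image, Basis.mem_span_image]
  simp [Set.subset_def, not_imp_comm]

lemma single_mem_Ej_iff {j : ℕ} {k : Fin ℓ} : (Pi.single k 1 : Fin ℓ → ZMod 2) ∈ Ej ℓ j ↔ k < j :=
  ⟨fun h => by simpa using mt (mem_Ej_iff.1 h k), fun h => subset_span ⟨k, h, rfl⟩⟩

lemma Ej_mono {j j' : ℕ} (h : j ≤ j') : Ej ℓ j ≤ Ej ℓ j' := fun _ hv =>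
  mem_Ej_iff.2 fun k hk => mem_Ej_iff.1 hv k (h.trans hk)

lemma inter_Ej_diff_eq_empty_iff (R : Submodule (ZMod 2) (Fin ℓ → ZMod 2)) (i : Fin ℓ) :
    (R : Set (Fin ℓ → ZMod 2)) ∩ ((Ej ℓ (i + 1) : Set (Fin ℓ → ZMod 2)) \ Ej ℓ i) = ∅ ↔
      Pi.single i 1 ∉ Ej ℓ i ⊔ R := by
  rw [Set.eq_empty_iff_forall_notMem, mem_sup]
  constructor
  · rintro h ⟨a, ha, r, hr, hsum⟩
    refine h r ⟨hr, ?_, fun hr' => ?_⟩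
    · rw [← add_sub_cancel_left a r, hsum]
      exact sub_mem (single_mem_Ej_iff.2 (by simp)) (Ej_mono (by simp) ha)
    · exact absurd (hsum ▸ add_mem ha hr') (by simp [single_mem_Ej_iff])
  · rintro h r ⟨hr, hr1, hr0⟩
    have hri : r i ≠ 0 := fun hri => hr0 <| mem_Ej_iff.2 fun k hk =>
      hk.eq_or_lt.elim (fun hik => Fin.ext hik ▸ hri) (mem_Ej_iff.1 hr1 k)
    refine h ⟨Pi.single i 1 - r, mem_Ej_iff.2 fun k hk => ?_, r, hr, sub_add_cancel _ _⟩
    rcases hk.eq_or_lt with hik | hik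
    · obtain rfl := Fin.ext hik
      rw [Pi.sub_apply, Pi.single_eq_same]
      exact (by decide : ∀ x : ZMod 2, x ≠ 0 → 1 - x = 0) _ hri
    · simp [(Fin.lt_def.2 hik).ne', mem_Ej_iff.1 hr1 k hik]

lemma decodable_iff_forall (K : Matrix (Fin ℓ) (Fin ℓ) (ZMod 2)) (i : Fin ℓ)
    (S : Finset (Fin ℓ)) :
    Decodable ℓ K i S ↔
      ∀ v, (∀ j < i, v j = 0) → (∀ j ∉ S, (v ᵥ* K) j = 0) → v i = 0 := by
  refine ⟨fun h v hlt hS => h v 0 (by simpa using hlt) (by simpa using hS),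
    fun h u u' hlt hS => sub_eq_zero.1 ?_⟩
  refine h (u - u') (fun j hj => by simp [hlt j hj]) (fun j hj => ?_)
  simp [sub_vecMul, hS j hj]

lemma decodable_iff_mem_sup (K : GL (Fin ℓ) (ZMod 2)) (i : Fin ℓ) (S : Finset (Fin ℓ)) :
    Decodable ℓ K i S ↔
      Pi.single i 1 ∈ Ej ℓ i ⊔ K • span (ZMod 2) (Pi.basisFun (ZMod 2) (Fin ℓ) '' (↑S)ᶜ) := by
  rw [decodable_iff_forall, mem_iff_forall_dotProduct_eq_zero, Units.smul_def, pointwise_smul_def,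
    map_span, Ej_eq_span_image, ← span_union]
  refine forall_congr' fun v => ?_
  rw [forall_mem_span_dotProduct_eq_zero]
  simp only [Set.mem_union, or_imp, forall_and, Set.forall_mem_image, Pi.basisFun_apply,
    DistribSMul.toLinearMap_apply, smul_eq_mulVec, dotProduct_mulVec,
    dotProduct_single_one, and_imp]
  rfl

lemma natCard_not_decodable_div_natCard (i : Fin ℓ) (S : Finset (Fin ℓ)) :
    (Nat.card {K : GL (Fin ℓ) (ZMod 2) // ¬ Decodable ℓ K i S} : ℝ) /
      Nat.card (GL (Fin ℓ) (ZMod 2)) = pis ℓ (i + 1) S.card := by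
  set V := span (ZMod 2) (Pi.basisFun (ZMod 2) (Fin ℓ) '' (↑S)ᶜ)
  set P : Submodule (ZMod 2) (Fin ℓ → ZMod 2) → Prop := fun R =>
    (R : Set (Fin ℓ → ZMod 2)) ∩ ((Ej ℓ (i + 1) : Set (Fin ℓ → ZMod 2)) \ Ej ℓ (i + 1 - 1)) = ∅
  have hV : finrank (ZMod 2) V = ℓ - S.card := by
    rw [finrank_span_basisFun_image, Fintype.card_compl_set]
    simp
  have hP (K : GL (Fin ℓ) (ZMod 2)) : ¬ Decodable ℓ K i S ↔ P (K • V) := by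
    simp only [P, Nat.add_sub_cancel, inter_Ej_diff_eq_empty_iff, decodable_iff_mem_sup]
    rfl
  have horbit : MulAction.orbit (GL (Fin ℓ) (ZMod 2)) V =
      {R : Submodule (ZMod 2) (Fin ℓ → ZMod 2) | finrank (ZMod 2) R = ℓ - S.card} := by
    rw [GeneralLinearGroup.orbit_submodule_eq, hV]
  have key := MulAction.natCard_subtype_smul_mul_natCard_orbit (G := GL (Fin ℓ) (ZMod 2)) V P
  rw [← Nat.card_congr (Equiv.subtypeEquivRight hP),
    Nat.card_congr (Equiv.subtypeSubtypeEquivSubtypeInter _ P), horbit] at key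
  have : Nonempty {R : Submodule (ZMod 2) (Fin ℓ → ZMod 2) // finrank (ZMod 2) R = ℓ - S.card} :=
    ⟨⟨V, hV⟩⟩
  rw [pis, div_eq_div_iff (by simp) (Nat.cast_ne_zero.2 Nat.card_pos.ne')]
  exact_mod_cast key

lemma sum_fK_eq_sum_natCard_not_decodable {ι : Type*} [Fintype ι]
    (K : ι → Matrix (Fin ℓ) (Fin ℓ) (ZMod 2)) (i : Fin ℓ) (z : ℝ) :
    ∑ a, fK ℓ (K a) i z = ∑ S : Finset (Fin ℓ),
      (Nat.card {a // ¬ Decodable ℓ (K a) i S} : ℝ) * (z ^ S.card * (1 - z) ^ (ℓ - S.card)) := by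
  simp only [fK]
  rw [Finset.sum_comm]
  refine Finset.sum_congr rfl fun S _ => ?_
  rw [Finset.sum_ite, Finset.sum_const_zero, add_zero, Finset.sum_const, nsmul_eq_mul,
    Nat.card_eq_fintype_card, Fintype.card_subtype]

end

theorem stmt9_general (ℓ : ℕ) (i : Fin ℓ) (z : ℝ) :
    (1 / (Fintype.card (Matrix.GeneralLinearGroup (Fin ℓ) (ZMod 2)) : ℝ)) *
        ∑ K : Matrix.GeneralLinearGroup (Fin ℓ) (ZMod 2),
          fK ℓ (K : Matrix (Fin ℓ) (Fin ℓ) (ZMod 2)) i z =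
      ∑ s ∈ Finset.range (ℓ + 1),
        (Nat.choose ℓ s : ℝ) * z ^ s * (1 - z) ^ (ℓ - s) * pis ℓ ((i : ℕ) + 1) s := by
  calc _ = ∑ S ∈ (Finset.univ : Finset (Fin ℓ)).powerset,
        pis ℓ (i + 1) S.card * (z ^ S.card * (1 - z) ^ (ℓ - S.card)) := by
        rw [sum_fK_eq_sum_natCard_not_decodable, Finset.mul_sum, Finset.powerset_univ,
          ← Nat.card_eq_fintype_card]
        refine Finset.sum_congr rfl fun S _ => ?_
        rw [← natCard_not_decodable_div_natCard]
        ring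
    _ = _ := by
        rw [Finset.sum_powerset_apply_card (fun s => pis ℓ (i + 1) s * (z ^ s * (1 - z) ^ (ℓ - s))),
          Finset.card_univ, Fintype.card_fin]
        refine Finset.sum_congr rfl fun s _ => ?_
        rw [nsmul_eq_mul]
        ring

theorem stmt9 (ℓ : ℕ) (hℓ : 1 ≤ ℓ) (i : Fin ℓ) (z : ℝ) (hz : z ∈ Set.Icc (0 : ℝ) 1) :
    (1 / (Fintype.card (Matrix.GeneralLinearGroup (Fin ℓ) (ZMod 2)) : ℝ)) *
        ∑ K : Matrix.GeneralLinearGroup (Fin ℓ) (ZMod 2),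
          fK ℓ (K : Matrix (Fin ℓ) (Fin ℓ) (ZMod 2)) i z =
      ∑ s ∈ Finset.range (ℓ + 1),
        (Nat.choose ℓ s : ℝ) * z ^ s * (1 - z) ^ (ℓ - s) * pis ℓ ((i : ℕ) + 1) s :=
  stmt9_general ℓ i z
end
end

section
/- Let ℓ ≥ 2, 1 ≤ i ≤ ℓ, and fix real β, δ > 0. If z ∈ (0,1] satisfies z > i/ℓ + ⌈δ·log₂ℓ⌉/ℓ + (β·ln ℓ/(2ℓ))^{1/2}, then F_i(z) > (1 − ℓ^{−β})(1 − ℓ^{−δ}). -/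
open scoped Classical

noncomputable section

/-! The weights `C(ℓ,s) z^s (1-z)^(ℓ-s)` are the binomial distribution, so by Hoeffding's
inequality the weight of `s < m := i + ⌈δ log₂ ℓ⌉` is at most `exp (-2ℓ (z - m/ℓ)²) < ℓ^(-β)`.
For `s ≥ m` we bound `p_{i|s}` from below by a union bound over the `2^(i-1)` vectors of
`E_i \ E_{i-1}`: since `GL(V)` acts transitively on nonzero vectors, double counting shows that a
fixed nonzero vector lies in a fraction `(q^d - 1)/(q^n - 1) ≤ q^(d-n)` of the `d`-dimensional
subspaces of `V = 𝔽_q^n`. Hence `p_{i|s} ≥ 1 - 2^(i-1-s) ≥ 1 - ℓ^(-δ)`. -/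

open Finset Module

theorem exists_linearEquiv_apply_eq (K : Type*) {V : Type*} [Field K] [AddCommGroup V] [Module K V]
    {v w : V} (hv : v ≠ 0) (hw : w ≠ 0) : ∃ g : V ≃ₗ[K] V, g v = w := by
  obtain ⟨g, hg⟩ := Submodule.exists_linearEquiv_restrict_eq
    ((LinearEquiv.toSpanNonzeroSingleton K V v hv).symm ≪≫ₗ
      LinearEquiv.toSpanNonzeroSingleton K V w hw)
  refine ⟨g, ?_⟩
  have := hg (LinearEquiv.toSpanNonzeroSingleton K V v hv 1)
  rw [LinearEquiv.trans_apply, LinearEquiv.symm_apply_apply,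
    LinearEquiv.toSpanNonzeroSingleton_one, LinearEquiv.toSpanNonzeroSingleton_one] at this
  exact this.symm

section FiniteField

variable (K V : Type*) [Field K] [AddCommGroup V] [Module K V] [Fintype V]

def subspacesOfFinrank (d : ℕ) : Finset (Submodule K V) := {R | finrank K R = d}

variable {K V}

theorem mem_subspacesOfFinrank {d : ℕ} {R : Submodule K V} :
    R ∈ subspacesOfFinrank K V d ↔ finrank K R = d := by
  simp [subspacesOfFinrank]

theorem subspacesOfFinrank_nonempty {d : ℕ} (hd : d ≤ finrank K V) :
    (subspacesOfFinrank K V d).Nonempty := by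
  obtain ⟨f, hf⟩ := exists_linearIndependent_of_le_finrank hd
  exact ⟨_, mem_subspacesOfFinrank.2 <| (finrank_span_eq_card hf).trans (Fintype.card_fin d)⟩

variable (K)

theorem card_filter_mem_subspacesOfFinrank_eq (d : ℕ) {v w : V} (hv : v ≠ 0) (hw : w ≠ 0) :
    #{R ∈ subspacesOfFinrank K V d | v ∈ R} = #{R ∈ subspacesOfFinrank K V d | w ∈ R} := by
  obtain ⟨g, rfl⟩ := exists_linearEquiv_apply_eq K hv hw
  refine card_bij' (fun R _ ↦ R.map (g : V →ₗ[K] V)) (fun R _ ↦ R.map (g.symm : V →ₗ[K] V))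
    ?_ ?_ ?_ ?_ <;> intro R hR
  · simp only [mem_filter, mem_subspacesOfFinrank] at hR ⊢
    exact ⟨(LinearEquiv.finrank_map_eq g R).trans hR.1, Submodule.mem_map_of_mem hR.2⟩
  · simp only [mem_filter, mem_subspacesOfFinrank] at hR ⊢
    refine ⟨(LinearEquiv.finrank_map_eq g.symm R).trans hR.1, ?_⟩
    simpa using Submodule.mem_map_of_mem (f := (g.symm : V →ₗ[K] V)) hR.2
  · simp [← Submodule.map_comp]
  · simp [← Submodule.map_comp]

variable [Fintype K]

theorem card_filter_mem_subspacesOfFinrank_mul (d : ℕ) {v : V} (hv : v ≠ 0) :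
    #{R ∈ subspacesOfFinrank K V d | v ∈ R} * (Fintype.card K ^ finrank K V - 1) =
      #(subspacesOfFinrank K V d) * (Fintype.card K ^ d - 1) := by
  let incident (w : V) (R : Submodule K V) : Prop := w ∈ R
  have hnonzero : #(univ.erase (0 : V)) = Fintype.card K ^ finrank K V - 1 := by
    rw [card_erase_of_mem (mem_univ (0 : V)), Finset.card_univ, card_eq_pow_finrank (K := K)]
  have hmem (R) (hR : R ∈ subspacesOfFinrank K V d) :
      #((univ.erase (0 : V)).bipartiteBelow incident R) = Fintype.card K ^ d - 1 := by
    have hR' : (univ.erase (0 : V)).bipartiteBelow incident R = (R : Set V).toFinset.erase 0 := by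
      ext; simp [incident, bipartiteBelow, and_comm]
    rw [hR', card_erase_of_mem (by simp), Set.toFinset_card, ← Nat.card_eq_fintype_card,
      SetLike.coe_sort_coe, natCard_eq_pow_finrank (K := K), Nat.card_eq_fintype_card,
      mem_subspacesOfFinrank.1 hR]
  rw [← hnonzero, mul_comm]
  refine card_mul_eq_card_mul incident (fun w hw ↦ ?_) hmem
  exact card_filter_mem_subspacesOfFinrank_eq K d (ne_of_mem_erase hw) hv

theorem card_filter_mem_subspacesOfFinrank_mul_le (d : ℕ) {v : V} (hv : v ≠ 0) :
    #{R ∈ subspacesOfFinrank K V d | v ∈ R} * Fintype.card K ^ finrank K V ≤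
      #(subspacesOfFinrank K V d) * Fintype.card K ^ d := by
  have h := card_filter_mem_subspacesOfFinrank_mul K d hv
  have hle := card_filter_le (subspacesOfFinrank K V d) (v ∈ ·)
  have hn : 1 ≤ Fintype.card K ^ finrank K V := Nat.one_le_pow _ _ (Fintype.card_pos (α := K))
  have hd : 1 ≤ Fintype.card K ^ d := Nat.one_le_pow _ _ (Fintype.card_pos (α := K))
  zify [hn, hd] at h hle ⊢
  linarith

theorem card_filter_exists_mem_subspacesOfFinrank_mul_le (d : ℕ) {S : Finset V} (hS : 0 ∉ S) :
    #{R ∈ subspacesOfFinrank K V d | ∃ v ∈ S, v ∈ R} * Fintype.card K ^ finrank K V ≤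
      #S * #(subspacesOfFinrank K V d) * Fintype.card K ^ d := by
  have hcover : {R ∈ subspacesOfFinrank K V d | ∃ v ∈ S, v ∈ R} ⊆
      S.biUnion fun v ↦ {R ∈ subspacesOfFinrank K V d | v ∈ R} := by
    intro R hR
    obtain ⟨hR, v, hv, hvR⟩ := mem_filter.1 hR
    exact mem_biUnion.2 ⟨v, hv, mem_filter.2 ⟨hR, hvR⟩⟩
  calc _ ≤ (∑ v ∈ S, #{R ∈ subspacesOfFinrank K V d | v ∈ R}) * Fintype.card K ^ finrank K V :=
        Nat.mul_le_mul_right _ ((card_le_card hcover).trans card_biUnion_le)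
    _ ≤ ∑ _v ∈ S, #(subspacesOfFinrank K V d) * Fintype.card K ^ d := by
        rw [sum_mul]
        exact sum_le_sum fun v hv ↦
          card_filter_mem_subspacesOfFinrank_mul_le K d (ne_of_mem_of_not_mem hv hS)
    _ = _ := by rw [sum_const, smul_eq_mul, mul_assoc]

variable {K}

theorem one_sub_le_card_finrank_eq_inter_eq_empty_div (S : Set V) (hS : 0 ∉ S) {d : ℕ}
    (hd : d ≤ finrank K V) :
    1 - (S.ncard * Fintype.card K ^ d / Fintype.card K ^ finrank K V : ℝ) ≤
      (Nat.card {R : Submodule K V // finrank K R = d ∧ (R : Set V) ∩ S = ∅} : ℝ) /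
        Nat.card {R : Submodule K V // finrank K R = d} := by
  set G := subspacesOfFinrank K V d
  set bad := {R ∈ G | ∃ v ∈ S.toFinset, v ∈ R}
  have hG : Nat.card {R : Submodule K V // finrank K R = d} = #G := by
    rw [Nat.card_eq_fintype_card, Fintype.card_subtype]; rfl
  have hgood : Nat.card {R : Submodule K V // finrank K R = d ∧ (R : Set V) ∩ S = ∅} =
      #G - #bad := by
    rw [Nat.card_eq_fintype_card, Fintype.card_subtype, ← card_filter_add_card_filter_not (s := G)
      (fun R : Submodule K V ↦ ∃ v ∈ S.toFinset, v ∈ R), Nat.add_sub_cancel_left]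
    congr 1
    ext R
    simp only [G, mem_filter, mem_univ, true_and, mem_subspacesOfFinrank, Set.mem_toFinset,
      not_exists, not_and, Set.eq_empty_iff_forall_notMem, Set.mem_inter_iff, SetLike.mem_coe]
    exact and_congr_right fun _ ↦ forall_congr' fun _ ↦ imp_not_comm
  have hbad := card_filter_exists_mem_subspacesOfFinrank_mul_le K d (S := S.toFinset)
    (by simpa using hS)
  have hGpos : (0 : ℝ) < #G := by exact_mod_cast (subspacesOfFinrank_nonempty hd).card_pos
  have hqpos : (0 : ℝ) < Fintype.card K ^ finrank K V := by positivity
  rw [hG, hgood, Nat.cast_sub (card_le_card (filter_subset _ _)), sub_div, div_self hGpos.ne',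
    Set.ncard_eq_toFinset_card']
  refine sub_le_sub_left ?_ 1
  rw [div_le_div_iff₀ hGpos hqpos]
  exact_mod_cast (by linarith [hbad] : #bad * Fintype.card K ^ finrank K V ≤ _)

end FiniteField

theorem Ej_eq_span_range {ℓ j : ℕ} (hj : j ≤ ℓ) :
    Ej ℓ j = Submodule.span (ZMod 2)
      (Set.range (Pi.basisFun (ZMod 2) (Fin ℓ) ∘ Fin.castLE hj)) := by
  rw [Ej]
  congr 1
  ext v
  constructor
  · rintro ⟨k, hk, rfl⟩
    exact ⟨⟨k, hk⟩, by simp⟩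
  · rintro ⟨k, rfl⟩
    exact ⟨Fin.castLE hj k, k.2, by simp⟩

theorem finrank_Ej {ℓ j : ℕ} (hj : j ≤ ℓ) : finrank (ZMod 2) (Ej ℓ j) = j := by
  rw [Ej_eq_span_range hj, finrank_span_eq_card
    ((Pi.basisFun _ _).linearIndependent.comp _ (Fin.castLE_injective hj)), Fintype.card_fin]

theorem ncard_Ej {ℓ j : ℕ} (hj : j ≤ ℓ) : (Ej ℓ j : Set (Fin ℓ → ZMod 2)).ncard = 2 ^ j := by
  rw [← Nat.card_coe_set_eq, SetLike.coe_sort_coe, natCard_eq_pow_finrank (K := ZMod 2),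
    Nat.card_zmod, finrank_Ej hj]

theorem ncard_Ej_sdiff_le {ℓ i : ℕ} (hi : i ≤ ℓ) :
    ((Ej ℓ i : Set (Fin ℓ → ZMod 2)) \ Ej ℓ (i - 1)).ncard ≤ 2 ^ (i - 1) := by
  have hmono : (Ej ℓ (i - 1) : Set (Fin ℓ → ZMod 2)) ⊆ Ej ℓ i :=
    Submodule.span_mono fun v ⟨k, hk, hv⟩ ↦ ⟨k, by omega, hv⟩
  rw [Set.ncard_sdiff hmono, ncard_Ej hi, ncard_Ej (by omega)]
  have : 2 ^ i ≤ 2 ^ (i - 1) * 2 := by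
    rw [← pow_succ]; exact Nat.pow_le_pow_right two_pos (by omega)
  omega

theorem one_sub_two_pow_div_le_pis {ℓ i s : ℕ} (hi : i ≤ ℓ) (hs : s ≤ ℓ) :
    1 - (2 : ℝ) ^ (i - 1) / 2 ^ s ≤ pis ℓ i s := by
  have h := one_sub_le_card_finrank_eq_inter_eq_empty_div (K := ZMod 2)
    ((Ej ℓ i : Set (Fin ℓ → ZMod 2)) \ Ej ℓ (i - 1)) (fun h ↦ h.2 (Ej ℓ (i - 1)).zero_mem)
    (d := ℓ - s) (by simp)
  rw [ZMod.card, finrank_fin_fun, Nat.cast_ofNat] at h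
  refine le_trans (sub_le_sub_left ?_ 1) h
  calc _ ≤ (2 : ℝ) ^ (i - 1) * 2 ^ (ℓ - s) / 2 ^ ℓ := by
        gcongr
        exact_mod_cast ncard_Ej_sdiff_le hi
    _ = _ := by
        rw [div_eq_div_iff (by positivity) (by positivity), ← pow_add, ← pow_add, ← pow_add]
        congr 1
        omega

open Real MeasureTheory ProbabilityTheory

-- `exp (t z) (1 - z + z e^(-t))` is the moment generating function at `-t` of a centred
-- Bernoulli(`z`) variable, so this is Hoeffding's lemma.
theorem one_sub_add_mul_exp_neg_le {z : ℝ} (hz0 : 0 ≤ z) (hz1 : z ≤ 1) (t : ℝ) :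
    1 - z + z * exp (-t) ≤ exp (t ^ 2 / 8 - t * z) := by
  let μ : Measure Bool := bernoulliMeasure true false ⟨z, hz0, hz1⟩
  let X : Bool → ℝ := fun b ↦ if b then 1 else 0
  have hX : μ[X] = z := by simp [μ, X, integral_bernoulliMeasure]
  have h := (hasSubgaussianMGF_of_mem_Icc (μ := μ) (X := X) (a := 0) (b := 1)
    (Measurable.of_discrete.aemeasurable) (.of_forall fun b ↦ by cases b <;> simp [X])).mgf_le (-t)
  rw [mgf, integral_bernoulliMeasure] at h
  simp [X, hX] at h
  have e1 : exp (-(t * z)) * exp (-(t * (1 - z))) = exp (-t) := by rw [← exp_add]; ring_nf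
  have e2 : exp (-(t * z)) * exp (t * z) = 1 := by rw [← exp_add]; simp
  calc 1 - z + z * exp (-t)
      = exp (-(t * z)) * (z * exp (-(t * (1 - z))) + (1 - z) * exp (t * z)) := by
        linear_combination -z * e1 - (1 - z) * e2
    _ ≤ exp (-(t * z)) * exp (t ^ 2 / 8) := by
        gcongr
        exact h.trans_eq (congrArg exp (by ring))
    _ = exp (t ^ 2 / 8 - t * z) := by rw [← exp_add]; ring_nf

theorem sum_range_choose_mul_pow_le_exp_mul {ℓ m : ℕ} (hm : m ≤ ℓ + 1) {z : ℝ} (hz0 : 0 ≤ z)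
    (hz1 : z ≤ 1) {t : ℝ} (ht : 0 ≤ t) :
    ∑ s ∈ range m, (ℓ.choose s : ℝ) * z ^ s * (1 - z) ^ (ℓ - s) ≤
      exp (t * m) * (1 - z + z * exp (-t)) ^ ℓ := by
  have hterm (s : ℕ) (hs : s < m) : (ℓ.choose s : ℝ) * z ^ s * (1 - z) ^ (ℓ - s) ≤
      exp (t * m) * ((z * exp (-t)) ^ s * (1 - z) ^ (ℓ - s) * ℓ.choose s) := by
    have hexp : 1 ≤ exp (t * m) * exp (-t) ^ s := by
      rw [← exp_nat_mul, ← exp_add, one_le_exp_iff]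
      nlinarith [(Nat.cast_lt (α := ℝ)).2 hs]
    have hw : 0 ≤ (ℓ.choose s : ℝ) * z ^ s * (1 - z) ^ (ℓ - s) := by
      have : 0 ≤ 1 - z := by linarith
      positivity
    calc _ ≤ (ℓ.choose s : ℝ) * z ^ s * (1 - z) ^ (ℓ - s) * (exp (t * m) * exp (-t) ^ s) :=
          le_mul_of_one_le_right hw hexp
      _ = _ := by ring
  calc _ ≤ ∑ s ∈ range m, exp (t * m) * ((z * exp (-t)) ^ s * (1 - z) ^ (ℓ - s) * ℓ.choose s) :=
        sum_le_sum fun s hs ↦ hterm s (mem_range.1 hs)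
    _ ≤ ∑ s ∈ range (ℓ + 1), exp (t * m) *
          ((z * exp (-t)) ^ s * (1 - z) ^ (ℓ - s) * ℓ.choose s) := by
        refine sum_le_sum_of_subset_of_nonneg (range_subset_range.2 hm) fun s _ _ ↦ ?_
        have : 0 ≤ 1 - z := by linarith
        positivity
    _ = exp (t * m) * (1 - z + z * exp (-t)) ^ ℓ := by rw [← mul_sum, ← add_pow, add_comm]

theorem sum_range_choose_mul_pow_le_exp {ℓ m : ℕ} (hℓ : 0 < ℓ) {z : ℝ} (hz0 : 0 ≤ z)
    (hz1 : z ≤ 1) (hmz : (m : ℝ) / ℓ ≤ z) :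
    ∑ s ∈ range m, (ℓ.choose s : ℝ) * z ^ s * (1 - z) ^ (ℓ - s) ≤
      exp (-(2 * ℓ * (z - m / ℓ) ^ 2)) := by
  have hℓ' : (0 : ℝ) < ℓ := by exact_mod_cast hℓ
  have hm : m ≤ ℓ + 1 := by
    have : (m : ℝ) ≤ ℓ := by rw [div_le_iff₀ hℓ'] at hmz; nlinarith
    have : m ≤ ℓ := by exact_mod_cast this
    omega
  -- `t = 4 (z - m/ℓ)` minimises the Chernoff exponent `t m + ℓ (t²/8 - t z)`.
  have ht : 0 ≤ 4 * (z - m / ℓ) := by linarith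
  calc _ ≤ exp (4 * (z - m / ℓ) * m) * (1 - z + z * exp (-(4 * (z - m / ℓ)))) ^ ℓ :=
        sum_range_choose_mul_pow_le_exp_mul hm hz0 hz1 ht
    _ ≤ exp (4 * (z - m / ℓ) * m) *
          exp ((4 * (z - m / ℓ)) ^ 2 / 8 - 4 * (z - m / ℓ) * z) ^ ℓ := by
        have : 0 ≤ 1 - z + z * exp (-(4 * (z - m / ℓ))) := by
          nlinarith [exp_pos (-(4 * (z - m / ℓ)))]
        gcongr
        exact one_sub_add_mul_exp_neg_le hz0 hz1 _
    _ = exp (-(2 * ℓ * (z - m / ℓ) ^ 2)) := by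
        rw [← exp_nat_mul, ← exp_add]
        congr 1
        field_simp
        ring

theorem one_sub_sum_range_mul_le_Favg {ℓ m : ℕ} (i : ℕ) (hm : m ≤ ℓ + 1) {z : ℝ} (hz0 : 0 ≤ z)
    (hz1 : z ≤ 1) {c : ℝ} (hc : ∀ s ∈ Ico m (ℓ + 1), c ≤ pis ℓ i s) :
    (1 - ∑ s ∈ range m, (ℓ.choose s : ℝ) * z ^ s * (1 - z) ^ (ℓ - s)) * c ≤ Favg ℓ i z := by
  have hw (s : ℕ) : 0 ≤ (ℓ.choose s : ℝ) * z ^ s * (1 - z) ^ (ℓ - s) := by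
    have : 0 ≤ 1 - z := by linarith
    positivity
  have hpis (s : ℕ) : 0 ≤ pis ℓ i s := by unfold pis; positivity
  have hsum : ∑ s ∈ range (ℓ + 1), (ℓ.choose s : ℝ) * z ^ s * (1 - z) ^ (ℓ - s) = 1 := by
    simpa [mul_right_comm _ _ (ℓ.choose _ : ℝ), mul_comm] using (add_pow z (1 - z) ℓ).symm
  have htail : 1 - ∑ s ∈ range m, (ℓ.choose s : ℝ) * z ^ s * (1 - z) ^ (ℓ - s) =
      ∑ s ∈ Ico m (ℓ + 1), (ℓ.choose s : ℝ) * z ^ s * (1 - z) ^ (ℓ - s) := by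
    rw [← sum_range_add_sum_Ico _ hm] at hsum
    linarith
  rw [htail, Favg, ← sum_range_add_sum_Ico _ hm, sum_mul]
  refine le_add_of_nonneg_of_le (sum_nonneg fun s _ ↦ mul_nonneg (hw s) (hpis s))
    (sum_le_sum fun s hs ↦ mul_le_mul_of_nonneg_left (hc s hs) (hw s))

theorem inv_two_pow_le_rpow_neg {x δ : ℝ} (hx : 0 < x) {n : ℕ} (hn : δ * logb 2 x ≤ n) :
    ((2 : ℝ) ^ n)⁻¹ ≤ x ^ (-δ) := by
  rw [← rpow_natCast, ← rpow_neg zero_le_two, ← rpow_logb zero_lt_two (by norm_num) hx,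
    ← rpow_mul zero_le_two]
  exact rpow_le_rpow_of_exponent_le one_le_two (by linarith)

theorem one_sub_rpow_neg_le_pis {ℓ i n s : ℕ} (hℓ : 0 < ℓ) {δ : ℝ} (hn : δ * logb 2 ℓ ≤ n)
    (hs : i + n ≤ s) (hsℓ : s ≤ ℓ) : 1 - (ℓ : ℝ) ^ (-δ) ≤ pis ℓ i s := by
  refine le_trans (sub_le_sub_left ?_ 1) (one_sub_two_pow_div_le_pis (by omega) hsℓ)
  calc (2 : ℝ) ^ (i - 1) / 2 ^ s ≤ ((2 : ℝ) ^ n)⁻¹ := by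
        rw [div_le_iff₀ (by positivity), ← div_eq_inv_mul, le_div_iff₀ (by positivity),
          ← pow_add]
        exact pow_le_pow_right₀ one_le_two (by omega)
    _ ≤ (ℓ : ℝ) ^ (-δ) := inv_two_pow_le_rpow_neg (by exact_mod_cast hℓ) hn

theorem exp_lt_rpow_neg_of_sqrt_lt {x β ε : ℝ} (hx : 0 < x)
    (h : √(β * log x / (2 * x)) < ε) : exp (-(2 * x * ε ^ 2)) < x ^ (-β) := by
  have h' := lt_sq_of_sqrt_lt h
  rw [div_lt_iff₀ (by positivity)] at h'
  rw [rpow_def_of_pos hx, exp_lt_exp]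
  linarith

theorem stmt13_general (ℓ i : ℕ) (hℓ : 2 ≤ ℓ) (β δ : ℝ)
    (hδ : 0 < δ) (z : ℝ) (hz : z ∈ Set.Ioc (0 : ℝ) 1)
    (hzlb : z > (i : ℝ) / ℓ + (⌈δ * Real.logb 2 ℓ⌉ : ℝ) / ℓ +
      Real.sqrt (β * Real.log ℓ / (2 * ℓ))) :
    Favg ℓ i z > (1 - (ℓ : ℝ) ^ (-β)) * (1 - (ℓ : ℝ) ^ (-δ)) := by
  obtain ⟨hz0, hz1⟩ := hz
  have hℓ1 : (1 : ℝ) < ℓ := by exact_mod_cast hℓ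
  have hℓ0 : (0 : ℝ) < ℓ := by linarith
  set n := ⌈δ * logb 2 ℓ⌉.toNat
  have hn : (n : ℝ) = ⌈δ * logb 2 ℓ⌉ := by
    exact_mod_cast Int.toNat_of_nonneg (Int.ceil_nonneg (mul_pos hδ (logb_pos one_lt_two hℓ1)).le)
  have hzm : ((i + n : ℕ) : ℝ) / ℓ + √(β * log ℓ / (2 * ℓ)) < z := by
    push_cast
    rw [add_div, hn]
    linarith
  have hmz : ((i + n : ℕ) : ℝ) / ℓ < z := by linarith [sqrt_nonneg (β * log ℓ / (2 * ℓ))]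
  have hmℓ : i + n ≤ ℓ := by exact_mod_cast ((div_lt_one hℓ0).1 (hmz.trans_le hz1)).le
  have hhead := (sum_range_choose_mul_pow_le_exp (by omega) hz0.le hz1 hmz.le).trans_lt
    (exp_lt_rpow_neg_of_sqrt_lt hℓ0 (lt_sub_iff_add_lt'.2 hzm))
  have htail (s : ℕ) (hs : s ∈ Ico (i + n) (ℓ + 1)) : 1 - (ℓ : ℝ) ^ (-δ) ≤ pis ℓ i s :=
    one_sub_rpow_neg_le_pis (by omega) (hn ▸ Int.le_ceil _) (mem_Ico.1 hs).1
      (Nat.lt_succ_iff.1 (mem_Ico.1 hs).2)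
  have hδ1 : 0 < 1 - (ℓ : ℝ) ^ (-δ) := sub_pos.2 (rpow_lt_one_of_one_lt_of_neg hℓ1 (by linarith))
  calc (1 - (ℓ : ℝ) ^ (-β)) * (1 - (ℓ : ℝ) ^ (-δ))
      < (1 - ∑ s ∈ range (i + n), (ℓ.choose s : ℝ) * z ^ s * (1 - z) ^ (ℓ - s)) *
          (1 - (ℓ : ℝ) ^ (-δ)) := by gcongr
    _ ≤ Favg ℓ i z := one_sub_sum_range_mul_le_Favg i (by omega) hz0.le hz1 htail

theorem stmt13 (ℓ i : ℕ) (hℓ : 2 ≤ ℓ) (hi : 1 ≤ i) (hiℓ : i ≤ ℓ) (β δ : ℝ)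
    (hβ : 0 < β) (hδ : 0 < δ) (z : ℝ) (hz : z ∈ Set.Ioc (0 : ℝ) 1)
    (hzlb : z > (i : ℝ) / ℓ + (⌈δ * Real.logb 2 ℓ⌉ : ℝ) / ℓ +
      Real.sqrt (β * Real.log ℓ / (2 * ℓ))) :
    Favg ℓ i z > (1 - (ℓ : ℝ) ^ (-β)) * (1 - (ℓ : ℝ) ^ (-δ)) :=
  stmt13_general ℓ i hℓ β δ hδ z hz hzlb

end
end
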